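/- If the base distance is identically zero, d(·,·) = 0, the LP graph GOSPA distance reduces to d̃^{(c,ε)}(X,Y) = min_{W∈𝒲̄_{X,Y}} ( (c^p/2)(Σ_{i=1}^{n_X} W(i, n_Y+1) + Σ_{j=1}^{n_Y} W(n_X+1, j)) + e_{X,Y}(W)^p )^{1/p}, and d̃^{(c,ε)} is a pseudometric on graphs: (i) d̃^{(c,ε)}(X,X) = 0; (ii) d̃^{(c,ε)}(X,Y) = d̃^{(c,ε)}(Y,X); (iii) d̃^{(c,ε)}(X,Y) ≤ d̃^{(c,ε)}(X,Z) + d̃^{(c,ε)}(Z,Y). -/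

import Mathlib

/-!
Transposing an assignment matrix exchanges the roles of `X` and `Y` and preserves both costs,
because adjacency matrices are symmetric; this gives symmetry, and the identity assignment
gives `d̃(X, X) = 0`. For the triangle inequality, plans `W₁ : X → Z` and `W₂ : Z → Y` compose
to a plan `X → Y` whose top-left block is `W₁'W₂'`. Since
`A_X W₁'W₂' − W₁'W₂' A_Y = (A_X W₁' − W₁' A_Z) W₂' + W₁' (A_Z W₂' − W₂' A_Y)`
and multiplying by a nonnegative matrix with row (or column) sums at most one does not increase
the entrywise 1-norm, the edge cost is subadditive under composition; so is the unassignment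
cost, because mass through `Z` can only become unassigned where it already was in `W₁` or `W₂`.
Finally `x ↦ x^{1/p}` is monotone and subadditive for `p ≥ 1`.
-/

open scoped BigOperators Matrix

namespace GraphGOSPA

/-- An undirected unweighted graph without node attributes: a number of nodes
together with a symmetric `{0,1}`-valued adjacency matrix with zero diagonal. -/
structure GraphNA where
  n : ℕ
  A : Matrix (Fin n) (Fin n) ℝ
  A_symm : A.IsSymm
  A_01 : ∀ i j, A i j = 0 ∨ A i j = 1
  A_diag : ∀ i, A i i = 0

/-- Componentwise 1-norm of a matrix. -/
def onorm {m n : ℕ} (M : Matrix (Fin m) (Fin n) ℝ) : ℝ :=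
  ∑ i, ∑ j, |M i j|

/-- The top-left `m × n` block of an `(m+1) × (n+1)` matrix. -/
def topLeft {m n : ℕ} (W : Matrix (Fin (m+1)) (Fin (n+1)) ℝ) :
    Matrix (Fin m) (Fin n) ℝ :=
  fun i j => W i.castSucc j.castSucc

/-- The set `𝒲_{X,Y}` of binary assignment matrices: entries in `{0,1}`,
each of the first `nY` columns sums to 1, each of the first `nX` rows sums to 1,
and the bottom-right corner is 0. -/
def Wset (nX nY : ℕ) : Set (Matrix (Fin (nX+1)) (Fin (nY+1)) ℝ) :=
  {W | (∀ i j, W i j = 0 ∨ W i j = 1) ∧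
    (∀ j : Fin nY, ∑ i, W i j.castSucc = 1) ∧
    (∀ i : Fin nX, ∑ j, W i.castSucc j = 1) ∧
    W (Fin.last nX) (Fin.last nY) = 0}

/-- The relaxed set `𝒲̄_{X,Y}`: nonnegative entries, with the same row/column sum
constraints and zero bottom-right corner. -/
def WbarSet (nX nY : ℕ) : Set (Matrix (Fin (nX+1)) (Fin (nY+1)) ℝ) :=
  {W | (∀ i j, 0 ≤ W i j) ∧
    (∀ j : Fin nY, ∑ i, W i j.castSucc = 1) ∧
    (∀ i : Fin nX, ∑ j, W i.castSucc j = 1) ∧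
    W (Fin.last nX) (Fin.last nY) = 0}

/-- The edge mismatch cost `e_{X,Y}(W)^p = (ε^p/2)‖A_X W' − W' A_Y‖`. -/
noncomputable def edgeCost (p ε : ℝ) (X Y : GraphNA)
    (W : Matrix (Fin (X.n+1)) (Fin (Y.n+1)) ℝ) : ℝ :=
  ε ^ p / 2 * onorm (X.A * topLeft W - topLeft W * Y.A)

/-- The unassignment cost `(c^p/2)(Σ_i W(i, n_Y+1) + Σ_j W(n_X+1, j))`. -/
noncomputable def missFalseCost (p c : ℝ) (X Y : GraphNA)
    (W : Matrix (Fin (X.n+1)) (Fin (Y.n+1)) ℝ) : ℝ :=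
  c ^ p / 2 * ((∑ i : Fin X.n, W i.castSucc (Fin.last Y.n)) +
    (∑ j : Fin Y.n, W (Fin.last X.n) j.castSucc))

/-- The cost matrix `D_{X,Y}` for the identically-zero base distance `d(·,·) = 0`:
localisation entries are `0^p = 0`, unassignment entries are `c^p/2`, and the
bottom-right corner is 0. -/
noncomputable def Dmat0 (p c : ℝ) (X Y : GraphNA) :
    Matrix (Fin (X.n+1)) (Fin (Y.n+1)) ℝ :=
  fun i j =>
    if (i : ℕ) < X.n then
      if (j : ℕ) < Y.n then 0
      else c ^ p / 2
    else if (j : ℕ) < Y.n then c ^ p / 2 else 0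

/-- The LP graph GOSPA distance with identically-zero base distance. -/
noncomputable def gospaLP0 (p c ε : ℝ) (X Y : GraphNA) : ℝ :=
  sInf {v | ∃ W ∈ WbarSet X.n Y.n,
    v = Matrix.trace ((Dmat0 p c X Y)ᵀ * W) + edgeCost p ε X Y W} ^ (1 / p)

/-- The graph GOSPA pseudometric `d̃^{(c,ε)}` for graphs without node attributes
(LP relaxation). -/
noncomputable def dtilde (p c ε : ℝ) (X Y : GraphNA) : ℝ :=
  sInf {v | ∃ W ∈ WbarSet X.n Y.n,
    v = missFalseCost p c X Y W + edgeCost p ε X Y W} ^ (1 / p)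

open scoped Pointwise

lemma onorm_nonneg {m n : ℕ} (M : Matrix (Fin m) (Fin n) ℝ) : 0 ≤ onorm M :=
  Finset.sum_nonneg fun _ _ => Finset.sum_nonneg fun _ _ => abs_nonneg _

lemma onorm_neg {m n : ℕ} (M : Matrix (Fin m) (Fin n) ℝ) : onorm (-M) = onorm M := by
  simp [onorm]

lemma onorm_transpose {m n : ℕ} (M : Matrix (Fin m) (Fin n) ℝ) : onorm Mᵀ = onorm M :=
  Finset.sum_comm

lemma onorm_add_le {m n : ℕ} (M N : Matrix (Fin m) (Fin n) ℝ) :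
    onorm (M + N) ≤ onorm M + onorm N := by
  simp only [onorm, ← Finset.sum_add_distrib]
  exact Finset.sum_le_sum fun i _ => Finset.sum_le_sum fun j _ => abs_add_le _ _

lemma onorm_mul_le_of_row_sum_le {m k n : ℕ} (M : Matrix (Fin m) (Fin k) ℝ)
    {B : Matrix (Fin k) (Fin n) ℝ} (hB : ∀ i j, 0 ≤ B i j) (hrow : ∀ i, ∑ j, B i j ≤ 1) :
    onorm (M * B) ≤ onorm M := by
  refine Finset.sum_le_sum fun i _ => ?_
  calc ∑ j, |(M * B) i j| ≤ ∑ j, ∑ a, |M i a| * B a j := by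
        refine Finset.sum_le_sum fun j _ => ?_
        rw [Matrix.mul_apply]
        refine (Finset.abs_sum_le_sum_abs _ _).trans_eq ?_
        simp only [abs_mul, abs_of_nonneg (hB _ j)]
    _ = ∑ a, |M i a| * ∑ j, B a j := by rw [Finset.sum_comm]; simp only [Finset.mul_sum]
    _ ≤ ∑ a, |M i a| := Finset.sum_le_sum fun a _ =>
        mul_le_of_le_one_right (abs_nonneg _) (hrow a)

lemma onorm_mul_le_of_col_sum_le {m k n : ℕ} {A : Matrix (Fin m) (Fin k) ℝ}
    (N : Matrix (Fin k) (Fin n) ℝ) (hA : ∀ i j, 0 ≤ A i j) (hcol : ∀ j, ∑ i, A i j ≤ 1) :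
    onorm (A * N) ≤ onorm N := by
  simpa only [← Matrix.transpose_mul, onorm_transpose] using
    onorm_mul_le_of_row_sum_le Nᵀ (B := Aᵀ) (fun i j => hA j i) hcol

lemma topLeft_transpose {m n : ℕ} (W : Matrix (Fin (m+1)) (Fin (n+1)) ℝ) :
    topLeft Wᵀ = (topLeft W)ᵀ := rfl

section WbarSet

variable {nX nY : ℕ} {W : Matrix (Fin (nX+1)) (Fin (nY+1)) ℝ}

lemma transpose_mem_WbarSet (hW : W ∈ WbarSet nX nY) : Wᵀ ∈ WbarSet nY nX :=
  ⟨fun i j => hW.1 j i, hW.2.2.1, hW.2.1, hW.2.2.2⟩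

lemma sum_topLeft_row_le (hW : W ∈ WbarSet nX nY) (i : Fin nX) :
    ∑ j, topLeft W i j ≤ 1 := by
  have h := hW.2.2.1 i
  rw [Fin.sum_univ_castSucc] at h
  change ∑ j : Fin nY, W i.castSucc j.castSucc ≤ 1
  linarith [hW.1 i.castSucc (Fin.last nY)]

lemma sum_topLeft_col_le (hW : W ∈ WbarSet nX nY) (j : Fin nY) :
    ∑ i, topLeft W i j ≤ 1 :=
  sum_topLeft_row_le (transpose_mem_WbarSet hW) j

end WbarSet

def idPlan (n : ℕ) : Matrix (Fin (n+1)) (Fin (n+1)) ℝ :=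
  Matrix.diagonal (Fin.lastCases 0 fun _ => 1)

lemma idPlan_mem (n : ℕ) : idPlan n ∈ WbarSet n n := by
  refine ⟨fun i j => ?_, fun j => ?_, fun i => ?_, by simp [idPlan]⟩
  · rw [idPlan, Matrix.diagonal_apply]
    split_ifs
    · cases i using Fin.lastCases <;> simp
    · rfl
  · simp [idPlan, Matrix.diagonal_apply]
  · simp [idPlan, Matrix.diagonal_apply]

lemma topLeft_idPlan (n : ℕ) : topLeft (idPlan n) = 1 := by
  ext i j
  simp [topLeft, idPlan, Matrix.diagonal_apply, Matrix.one_apply]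

def unassignedPlan (nX nY : ℕ) : Matrix (Fin (nX+1)) (Fin (nY+1)) ℝ :=
  fun i j => if (i = Fin.last nX ↔ j = Fin.last nY) then 0 else 1

lemma unassignedPlan_mem (nX nY : ℕ) : unassignedPlan nX nY ∈ WbarSet nX nY := by
  refine ⟨fun i j => ?_, fun j => ?_, fun i => ?_, by simp [unassignedPlan]⟩
  · unfold unassignedPlan; split_ifs <;> norm_num
  · simp [unassignedPlan, Fin.castSucc_ne_last]
  · simp [unassignedPlan, Fin.castSucc_ne_last]

/-- Composition of a plan from `X` to `Z` with a plan from `Z` to `Y`: mass routed through a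
node of `Z` is composed, mass unassigned on the `X` or `Y` side stays unassigned, and mass
passing through the dummy node of `Z` on both sides is discarded. -/
def composePlan {nX nZ nY : ℕ} (W₁ : Matrix (Fin (nX+1)) (Fin (nZ+1)) ℝ)
    (W₂ : Matrix (Fin (nZ+1)) (Fin (nY+1)) ℝ) : Matrix (Fin (nX+1)) (Fin (nY+1)) ℝ :=
  fun i j =>
    if i = Fin.last nX ∧ j = Fin.last nY then 0
    else ∑ k : Fin nZ, W₁ i k.castSucc * W₂ k.castSucc j
      + (if j = Fin.last nY then W₁ i (Fin.last nZ) else 0)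
      + (if i = Fin.last nX then W₂ (Fin.last nZ) j else 0)

section composePlan

variable {nX nZ nY : ℕ} {W₁ : Matrix (Fin (nX+1)) (Fin (nZ+1)) ℝ}
  {W₂ : Matrix (Fin (nZ+1)) (Fin (nY+1)) ℝ}

lemma composePlan_transpose : (composePlan W₁ W₂)ᵀ = composePlan W₂ᵀ W₁ᵀ := by
  ext i j
  simp only [Matrix.transpose_apply, composePlan, mul_comm, and_comm]
  split_ifs <;> ring

lemma topLeft_composePlan : topLeft (composePlan W₁ W₂) = topLeft W₁ * topLeft W₂ := by
  ext i j
  simp [topLeft, composePlan, Matrix.mul_apply, Fin.castSucc_ne_last]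

lemma sum_composePlan_row (h₂ : W₂ ∈ WbarSet nZ nY) (i : Fin nX) :
    ∑ j, composePlan W₁ W₂ i.castSucc j = ∑ k, W₁ i.castSucc k :=
  calc ∑ j, composePlan W₁ W₂ i.castSucc j
      = ∑ k : Fin nZ, W₁ i.castSucc k.castSucc * ∑ j, W₂ k.castSucc j
          + W₁ i.castSucc (Fin.last nZ) := by
        simp only [Fin.sum_univ_castSucc (n := nY), mul_add, Finset.mul_sum, Finset.sum_add_distrib]
        simp [composePlan, Fin.castSucc_ne_last, Finset.sum_comm (γ := Fin nY)]
        ring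
    _ = ∑ k, W₁ i.castSucc k := by simp [h₂.2.2.1, Fin.sum_univ_castSucc]

lemma composePlan_mem (h₁ : W₁ ∈ WbarSet nX nZ) (h₂ : W₂ ∈ WbarSet nZ nY) :
    composePlan W₁ W₂ ∈ WbarSet nX nY := by
  refine ⟨fun i j => ?_, fun j => ?_, fun i => ?_, by simp [composePlan]⟩
  · unfold composePlan
    have : 0 ≤ ∑ k : Fin nZ, W₁ i k.castSucc * W₂ k.castSucc j :=
      Finset.sum_nonneg fun k _ => mul_nonneg (h₁.1 _ _) (h₂.1 _ _)
    split_ifs <;> linarith [h₁.1 i (Fin.last nZ), h₂.1 (Fin.last nZ) j]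
  · simpa only [← composePlan_transpose, Matrix.transpose_apply, h₂.2.1 j] using
      sum_composePlan_row (W₁ := W₂ᵀ) (transpose_mem_WbarSet h₁) j
  · rw [sum_composePlan_row h₂, h₁.2.2.1 i]

lemma sum_composePlan_last_col_le (h₁ : W₁ ∈ WbarSet nX nZ) (h₂ : W₂ ∈ WbarSet nZ nY) :
    ∑ i : Fin nX, composePlan W₁ W₂ i.castSucc (Fin.last nY) ≤
      ∑ i : Fin nX, W₁ i.castSucc (Fin.last nZ) + ∑ k : Fin nZ, W₂ k.castSucc (Fin.last nY) :=
  calc ∑ i : Fin nX, composePlan W₁ W₂ i.castSucc (Fin.last nY)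
      = ∑ i : Fin nX, W₁ i.castSucc (Fin.last nZ)
          + ∑ k : Fin nZ, (∑ i, topLeft W₁ i k) * W₂ k.castSucc (Fin.last nY) := by
        simp [composePlan, Fin.castSucc_ne_last, topLeft, Finset.sum_add_distrib, Finset.sum_mul,
          Finset.sum_comm (γ := Fin nX)]
        ring
    _ ≤ _ := by
        gcongr with k
        exact mul_le_of_le_one_left (h₂.1 _ _) (sum_topLeft_col_le h₁ k)

lemma sum_composePlan_last_row_le (h₁ : W₁ ∈ WbarSet nX nZ) (h₂ : W₂ ∈ WbarSet nZ nY) :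
    ∑ j : Fin nY, composePlan W₁ W₂ (Fin.last nX) j.castSucc ≤
      ∑ k : Fin nZ, W₁ (Fin.last nX) k.castSucc + ∑ j : Fin nY, W₂ (Fin.last nZ) j.castSucc := by
  rw [add_comm]
  simpa only [← composePlan_transpose, Matrix.transpose_apply] using
    sum_composePlan_last_col_le (transpose_mem_WbarSet h₂) (transpose_mem_WbarSet h₁)

end composePlan

section cost

variable (p c ε : ℝ)

/-- The LP objective `tr[D_{X,Y}ᵀ W] + e_{X,Y}(W)^p` for the zero base distance
(see `trace_Dmat0_transpose_mul`). -/
noncomputable def planCost (X Y : GraphNA) (W : Matrix (Fin (X.n+1)) (Fin (Y.n+1)) ℝ) : ℝ :=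
  missFalseCost p c X Y W + edgeCost p ε X Y W

def costSet (X Y : GraphNA) : Set ℝ :=
  {v | ∃ W ∈ WbarSet X.n Y.n, v = planCost p c ε X Y W}

lemma dtilde_eq_sInf_costSet (X Y : GraphNA) :
    dtilde p c ε X Y = sInf (costSet p c ε X Y) ^ (1 / p) := rfl

lemma costSet_nonempty (X Y : GraphNA) : (costSet p c ε X Y).Nonempty :=
  ⟨_, _, unassignedPlan_mem X.n Y.n, rfl⟩

lemma planCost_idPlan (X : GraphNA) : planCost p c ε X X (idPlan X.n) = 0 := by
  rw [planCost, edgeCost, topLeft_idPlan, Matrix.mul_one, Matrix.one_mul, sub_self]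
  simp [missFalseCost, onorm, idPlan, Fin.castSucc_ne_last, (Fin.castSucc_ne_last _).symm]

lemma planCost_transpose (X Y : GraphNA) (W : Matrix (Fin (X.n+1)) (Fin (Y.n+1)) ℝ) :
    planCost p c ε Y X Wᵀ = planCost p c ε X Y W := by
  have hedge :
      Y.A * (topLeft W)ᵀ - (topLeft W)ᵀ * X.A = -(X.A * topLeft W - topLeft W * Y.A)ᵀ := by
    rw [Matrix.transpose_sub, Matrix.transpose_mul, Matrix.transpose_mul, X.A_symm, Y.A_symm,
      neg_sub]
  simp only [planCost, missFalseCost, edgeCost, topLeft_transpose, hedge, onorm_neg,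
    onorm_transpose, Matrix.transpose_apply]
  ring

lemma costSet_comm (X Y : GraphNA) : costSet p c ε X Y = costSet p c ε Y X := by
  ext v
  constructor <;> rintro ⟨W, hW, rfl⟩ <;>
    exact ⟨Wᵀ, transpose_mem_WbarSet hW, (planCost_transpose _ _ _ _ _ _).symm⟩

variable {p c ε}

lemma planCost_nonneg (hc : 0 ≤ c) (hε : 0 ≤ ε) {X Y : GraphNA}
    {W : Matrix (Fin (X.n+1)) (Fin (Y.n+1)) ℝ} (hW : ∀ i j, 0 ≤ W i j) :
    0 ≤ planCost p c ε X Y W := by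
  have hX : 0 ≤ ∑ i : Fin X.n, W i.castSucc (Fin.last Y.n) := Finset.sum_nonneg fun _ _ => hW _ _
  have hY : 0 ≤ ∑ j : Fin Y.n, W (Fin.last X.n) j.castSucc := Finset.sum_nonneg fun _ _ => hW _ _
  exact add_nonneg (mul_nonneg (by positivity) (add_nonneg hX hY))
    (mul_nonneg (by positivity) (onorm_nonneg _))

lemma costSet_nonneg (hc : 0 ≤ c) (hε : 0 ≤ ε) {X Y : GraphNA} :
    ∀ v ∈ costSet p c ε X Y, 0 ≤ v := by
  rintro v ⟨W, hW, rfl⟩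
  exact planCost_nonneg hc hε hW.1

lemma costSet_bddBelow (hc : 0 ≤ c) (hε : 0 ≤ ε) (X Y : GraphNA) :
    BddBelow (costSet p c ε X Y) :=
  ⟨0, costSet_nonneg hc hε⟩

lemma sInf_costSet_nonneg (hc : 0 ≤ c) (hε : 0 ≤ ε) (X Y : GraphNA) :
    0 ≤ sInf (costSet p c ε X Y) :=
  Real.sInf_nonneg (costSet_nonneg hc hε)

lemma sInf_costSet_self (hc : 0 ≤ c) (hε : 0 ≤ ε) (X : GraphNA) :
    sInf (costSet p c ε X X) = 0 :=
  le_antisymm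
    (csInf_le (costSet_bddBelow hc hε X X) ⟨_, idPlan_mem X.n, (planCost_idPlan ..).symm⟩)
    (sInf_costSet_nonneg hc hε X X)

lemma edgeCost_composePlan_le (hε : 0 ≤ ε) {X Z Y : GraphNA}
    {W₁ : Matrix (Fin (X.n+1)) (Fin (Z.n+1)) ℝ} {W₂ : Matrix (Fin (Z.n+1)) (Fin (Y.n+1)) ℝ}
    (h₁ : W₁ ∈ WbarSet X.n Z.n) (h₂ : W₂ ∈ WbarSet Z.n Y.n) :
    edgeCost p ε X Y (composePlan W₁ W₂) ≤ edgeCost p ε X Z W₁ + edgeCost p ε Z Y W₂ := by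
  set T₁ := topLeft W₁
  set T₂ := topLeft W₂
  have hsplit : X.A * (T₁ * T₂) - T₁ * T₂ * Y.A =
      (X.A * T₁ - T₁ * Z.A) * T₂ + T₁ * (Z.A * T₂ - T₂ * Y.A) := by
    simp only [Matrix.sub_mul, Matrix.mul_sub, Matrix.mul_assoc]
    abel
  have hnorm : onorm (X.A * (T₁ * T₂) - T₁ * T₂ * Y.A) ≤
      onorm (X.A * T₁ - T₁ * Z.A) + onorm (Z.A * T₂ - T₂ * Y.A) := by
    rw [hsplit]
    exact (onorm_add_le _ _).trans (add_le_add
      (onorm_mul_le_of_row_sum_le _ (fun _ _ => h₂.1 _ _) (sum_topLeft_row_le h₂))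
      (onorm_mul_le_of_col_sum_le _ (fun _ _ => h₁.1 _ _) (sum_topLeft_col_le h₁)))
  unfold edgeCost
  rw [topLeft_composePlan, ← mul_add]
  exact mul_le_mul_of_nonneg_left hnorm (by positivity)

lemma missFalseCost_composePlan_le (hc : 0 ≤ c) {X Z Y : GraphNA}
    {W₁ : Matrix (Fin (X.n+1)) (Fin (Z.n+1)) ℝ} {W₂ : Matrix (Fin (Z.n+1)) (Fin (Y.n+1)) ℝ}
    (h₁ : W₁ ∈ WbarSet X.n Z.n) (h₂ : W₂ ∈ WbarSet Z.n Y.n) :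
    missFalseCost p c X Y (composePlan W₁ W₂) ≤
      missFalseCost p c X Z W₁ + missFalseCost p c Z Y W₂ := by
  unfold missFalseCost
  rw [← mul_add]
  refine mul_le_mul_of_nonneg_left ?_ (by positivity)
  linarith [sum_composePlan_last_col_le h₁ h₂, sum_composePlan_last_row_le h₁ h₂]

lemma sInf_costSet_triangle (hc : 0 ≤ c) (hε : 0 ≤ ε) (X Z Y : GraphNA) :
    sInf (costSet p c ε X Y) ≤ sInf (costSet p c ε X Z) + sInf (costSet p c ε Z Y) := by
  rw [← csInf_add (costSet_nonempty ..) (costSet_bddBelow hc hε X Z) (costSet_nonempty ..)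
    (costSet_bddBelow hc hε Z Y)]
  refine le_csInf ((costSet_nonempty ..).add (costSet_nonempty ..)) ?_
  rintro _ ⟨_, ⟨W₁, h₁, rfl⟩, _, ⟨W₂, h₂, rfl⟩, rfl⟩
  refine csInf_le_of_le (costSet_bddBelow hc hε X Y) ⟨_, composePlan_mem h₁ h₂, rfl⟩ ?_
  unfold planCost
  linarith [missFalseCost_composePlan_le (p := p) hc h₁ h₂,
    edgeCost_composePlan_le (p := p) hε h₁ h₂]

end cost

lemma trace_Dmat0_transpose_mul (p c : ℝ) (X Y : GraphNA)
    (W : Matrix (Fin (X.n+1)) (Fin (Y.n+1)) ℝ) :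
    Matrix.trace ((Dmat0 p c X Y)ᵀ * W) = missFalseCost p c X Y W := by
  simp [Matrix.trace, Matrix.mul_apply, Fin.sum_univ_castSucc, Dmat0, missFalseCost,
    Finset.mul_sum, mul_add, add_comm]

/-- If the base distance is identically zero, the LP graph GOSPA
distance reduces to
`d̃^{(c,ε)}(X,Y) = min_{W∈𝒲̄_{X,Y}} ((c^p/2)(Σ_i W(i,n_Y+1) + Σ_j W(n_X+1,j)) + e_{X,Y}(W)^p)^{1/p}`,
and `d̃^{(c,ε)}` is a pseudometric on graphs: `d̃(X,X) = 0`, symmetry, and the triangle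
inequality hold. -/
theorem dtilde_is_pseudometric (p c ε : ℝ) (hp : 1 ≤ p) (hc : 0 < c) (hε : 0 < ε) :
    (∀ X Y : GraphNA, gospaLP0 p c ε X Y = dtilde p c ε X Y) ∧
    (∀ X : GraphNA, dtilde p c ε X X = 0) ∧
    (∀ X Y : GraphNA, dtilde p c ε X Y = dtilde p c ε Y X) ∧
    (∀ X Y Z : GraphNA,
      dtilde p c ε X Y ≤ dtilde p c ε X Z + dtilde p c ε Z Y) := by
  refine ⟨fun X Y => ?_, fun X => ?_, fun X Y => ?_, fun X Y Z => ?_⟩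
  · simp only [gospaLP0, dtilde, trace_Dmat0_transpose_mul]
  · rw [dtilde_eq_sInf_costSet, sInf_costSet_self hc.le hε.le,
      Real.zero_rpow (one_div_ne_zero (by linarith))]
  · rw [dtilde_eq_sInf_costSet, costSet_comm, dtilde_eq_sInf_costSet]
  · simp only [dtilde_eq_sInf_costSet]
    have h1p : 1 / p ≤ 1 := (div_le_one (by linarith)).mpr hp
    calc sInf (costSet p c ε X Y) ^ (1 / p)
        ≤ (sInf (costSet p c ε X Z) + sInf (costSet p c ε Z Y)) ^ (1 / p) :=
          Real.rpow_le_rpow (sInf_costSet_nonneg hc.le hε.le X Y)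
            (sInf_costSet_triangle hc.le hε.le X Z Y) (by positivity)
      _ ≤ sInf (costSet p c ε X Z) ^ (1 / p) + sInf (costSet p c ε Z Y) ^ (1 / p) :=
          Real.rpow_add_le_add_rpow (sInf_costSet_nonneg hc.le hε.le X Z)
            (sInf_costSet_nonneg hc.le hε.le Z Y) (by positivity) h1p

end GraphGOSPA
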